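/- arXiv:math/0508623 — 6 statements merged into one kernel-verified Lean document; each statement's English description precedes it below -/
import Mathlib

section
/- Let a ∈ PT_n and let z_a = |Z(a)|. The number of left annihilators of the semigroup (PT_n, *_a), i.e. of elements x ∈ PT_n with x *_a u = 0 for all u ∈ PT_n, equals (z_a + 1)^n. -/
/-!
`x` is a left annihilator of `(PT n, *_a)` iff `x · a = 0` (take `u = id`), i.e. iff every point
is sent by `x` either nowhere or into `Z(a)`. That leaves `z_a + 1` independent choices per point.
-/

/-- `PT n`: partial transformations of an `n`-element set, modeled as maps
`Fin n → Option (Fin n)` (`none` = undefined). -/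
abbrev PT (n : ℕ) := Fin n → Option (Fin n)

/-- Left-to-right composition of partial maps: `(x ⬝ y) i = y (x i)` when defined. -/
def PT.comp {n : ℕ} (x y : PT n) : PT n := fun i => (x i).bind y

/-- Deformed multiplication by `a`: `x *_a y = x · a · y` (left-to-right). -/
def PT.dmul {n : ℕ} (a x y : PT n) : PT n := PT.comp (PT.comp x a) y

/-- The nowhere defined map `0`. -/
def PT.zero {n : ℕ} : PT n := fun _ => none

/-- `z_a`: the number of points where `a` is undefined. -/
def PT.zcard {n : ℕ} (a : PT n) : ℕ :=
  (Finset.univ.filter fun i : Fin n => a i = none).card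

/-- `rank a = |ran a|`. -/
def PT.rank {n : ℕ} (a : PT n) : ℕ :=
  (Finset.univ.filter fun t : Fin n => ∃ i, a i = some t).card

/-- `α_k(a)`: the number of points `t` whose full preimage `a⁻¹(t)` has exactly `k` elements. -/
def PT.typeCount {n : ℕ} (a : PT n) (k : ℕ) : ℕ :=
  (Finset.univ.filter fun t : Fin n =>
    (Finset.univ.filter fun i : Fin n => a i = some t).card = k).card

/-- A permutation regarded as a (total) partial transformation. -/
def PT.ofPerm {n : ℕ} (σ : Equiv.Perm (Fin n)) : PT n := fun i => some (σ i)

open Finset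

theorem Option.card_filter_bind_eq_none {β γ : Type*} [Fintype β] (f : β → Option γ) :
    #{b : Option β | b.bind f = none} = #{j | f j = none} + 1 := by
  simp only [card_filter, Fintype.sum_option, Option.bind_none, Option.bind_some, if_true]
  exact add_comm _ _

namespace PT

variable {n : ℕ}

theorem comp_some (x : PT n) : comp x some = x :=
  funext fun i => Option.bind_fun_some (x i)

theorem zero_comp (y : PT n) : comp zero y = zero :=
  rfl

theorem forall_dmul_eq_zero_iff (a x : PT n) :
    (∀ u, dmul a x u = zero) ↔ comp x a = zero :=
  ⟨fun h => by simpa only [dmul, comp_some] using h some,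
    fun h u => by rw [dmul, h, zero_comp]⟩

theorem card_filter_comp_eq_zero (a : PT n) :
    #{x : PT n | comp x a = zero} = (zcard a + 1) ^ n := by
  have h_pi : ({x : PT n | comp x a = zero} : Finset (PT n)) =
      Fintype.piFinset fun _ => {b : Option (Fin n) | b.bind a = none} := by
    ext x
    simp [Fintype.mem_piFinset, funext_iff, comp, zero]
  rw [h_pi, Fintype.card_piFinset_const, Option.card_filter_bind_eq_none, zcard]

end PT

/-- The number of left annihilators of `(PT n, *_a)` equals `(z_a + 1)^n`. -/
theorem card_left_annihilators {n : ℕ} (a : PT n) :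
    (Finset.univ.filter fun x : PT n => ∀ u : PT n, PT.dmul a x u = PT.zero).card =
      (PT.zcard a + 1) ^ n := by
  simpa only [PT.forall_dmul_eq_zero_iff] using PT.card_filter_comp_eq_zero a
end

section
/- Let a ∈ PT_n with rank(a) = |ran(a)|. The number of right annihilators of the semigroup (PT_n, *_a), i.e. of elements y ∈ PT_n with u *_a y = 0 for all u ∈ PT_n, equals (n + 1)^(n − rank(a)). -/
/-! A right annihilator `y` of `(PT n, *_a)` is exactly a partial map undefined on `ran a`:
every `u · a` has image inside `ran a`, and the constant maps `u ≡ i` show that every point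
`a i` of `ran a` really occurs. Such `y` are free on the `n - rank a` remaining points, each
having `n + 1` choices of value (undefined or one of `n` points). -/

open Finset

theorem Fintype.card_filter_forall_mem_eq_none {α β : Type*} [Fintype α] [DecidableEq α]
    [Fintype β] (s : Finset α) [DecidablePred fun y : α → Option β => ∀ t ∈ s, y t = none] :
    #{y : α → Option β | ∀ t ∈ s, y t = none} = (Fintype.card β + 1) ^ (Fintype.card α - #s) := by
  have hpi : ({y : α → Option β | ∀ t ∈ s, y t = none} : Finset _) =
      Fintype.piFinset fun t => if t ∈ s then {none} else univ := by
    ext y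
    simp only [mem_filter, mem_univ, true_and, Fintype.mem_piFinset]
    refine forall_congr' fun t => ?_
    split_ifs with ht <;> simp [ht]
  rw [hpi, Fintype.card_piFinset]
  simp only [apply_ite Finset.card, card_singleton, card_univ]
  rw [prod_ite, prod_const_one, prod_const, one_mul, Fintype.card_option,
    filter_not, filter_mem_eq_inter, univ_inter,
    card_sdiff_of_subset (subset_univ s), card_univ]

namespace PT

variable {n : ℕ}

def ran (a : PT n) : Finset (Fin n) := {t | ∃ i, a i = some t}

theorem rank_eq_card_ran (a : PT n) : a.rank = #a.ran := rfl

theorem dmul_eq_zero_iff_eq_none_on_ran (a y : PT n) :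
    (∀ u, dmul a u y = zero) ↔ ∀ t ∈ a.ran, y t = none := by
  simp only [ran, mem_filter, mem_univ, true_and, forall_exists_index]
  constructor
  · intro h t i hi
    simpa [dmul, comp, zero, hi] using congrFun (h fun _ => some i) i
  · intro h u
    funext i
    simp only [dmul, comp, zero]
    rcases hu : u i with _ | j
    · rfl
    rcases ha : a j with _ | t
    · simp [ha]
    simpa [ha] using h t j ha

end PT

/-- The number of right annihilators of `(PT n, *_a)` equals `(n + 1)^(n - rank a)`. -/
theorem card_right_annihilators {n : ℕ} (a : PT n) :
    (Finset.univ.filter fun y : PT n => ∀ u : PT n, PT.dmul a u y = PT.zero).card =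
      (n + 1) ^ (n - PT.rank a) := by
  rw [filter_congr fun y _ => PT.dmul_eq_zero_iff_eq_none_on_ran a y,
    Fintype.card_filter_forall_mem_eq_none, Fintype.card_fin, PT.rank_eq_card_ran]
end

section
/- Let a ∈ PT_n and fix x₀ ∈ PT_n; set y := x₀·a (left-to-right composition), with domain {i₁,...,i_p} (so y is defined at exactly p points). Then the cardinality of the equivalence class {x ∈ PT_n : x·a = x₀·a} of x₀ under ∼_a equals n_a(y(i₁))·n_a(y(i₂))·…·n_a(y(i_p))·(z_a + 1)^(n−p), where for t ∈ ran(a), n_a(t) = |a⁻¹(t)| is the cardinality of the full preimage of t under a, and z_a = |Z(a)|. -/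
/-!
The condition `x·a = y` holds coordinatewise, so the class is a product over `i` of the sets of
values `x i ∈ Option (Fin n)` with `(x i).bind a = y i`. When `y i` is defined these are the
`n_a(y i)` points of its fibre; when `y i` is undefined they are the `z_a` points outside
`dom a` together with `none`.
-/

open Finset

namespace Option
variable {α β : Type*} [Fintype α] (f : α → Option β)

theorem card_filter_bind_eq_some [DecidableEq β] (b : β) :
    #{o : Option α | o.bind f = some b} = #{x | f x = some b} := by
  have : ({o : Option α | o.bind f = some b} : Finset _) = map .some {x | f x = some b} := by
    ext (_ | x) <;> simp
  rw [this, card_map]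

theorem card_filter_bind_eq_none_s9 :
    #{o : Option α | o.bind f = none} = #{x | f x = none} + 1 := by
  have : ({o : Option α | o.bind f = none} : Finset _) = insertNone {x | f x = none} := by
    ext (_ | x) <;> simp
  rw [this, card_insertNone]

end Option

theorem Fintype.card_filter_comp_eq {ι γ δ : Type*} [Fintype ι] [DecidableEq ι] [Fintype γ]
    [DecidableEq δ] (g : γ → δ) (y : ι → δ) :
    #{x : ι → γ | g ∘ x = y} = ∏ i, #{c | g c = y i} := by
  rw [← Fintype.card_piFinset]
  congr
  ext x
  simp [Fintype.mem_piFinset, funext_iff]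

/-- The cardinality of the `∼_a`-class of `x₀` equals
`n_a(y i₁) ⋯ n_a(y i_p) · (z_a + 1)^(n - p)`, where `y = x₀·a` has domain
`{i₁,…,i_p}` and `n_a(t) = |a⁻¹(t)|`. -/
theorem card_sim_class {n : ℕ} (a x₀ : PT n) :
    (Finset.univ.filter fun x : PT n => PT.comp x a = PT.comp x₀ a).card =
      (∏ i ∈ Finset.univ.filter (fun i : Fin n => (PT.comp x₀ a) i ≠ none),
        (Finset.univ.filter fun j : Fin n => a j = (PT.comp x₀ a) i).card) *
      (PT.zcard a + 1) ^
        (n - (Finset.univ.filter fun i : Fin n => (PT.comp x₀ a) i ≠ none).card) := by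
  set y := PT.comp x₀ a
  have hclass : #{x : PT n | PT.comp x a = y} = ∏ i, #{o : Option (Fin n) | o.bind a = y i} :=
    Fintype.card_filter_comp_eq (fun o : Option (Fin n) => o.bind a) y
  have hundef : #{i | ¬y i ≠ none} = n - #{i | y i ≠ none} := by
    rw [filter_not, card_sdiff_of_subset (filter_subset _ _), card_univ, Fintype.card_fin]
  rw [hclass, ← prod_filter_mul_prod_filter_not univ (fun i => y i ≠ none), ← hundef]
  congr 1
  · refine prod_congr rfl fun i hi => ?_
    obtain ⟨t, ht⟩ := Option.ne_none_iff_exists'.mp (mem_filter.mp hi).2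
    rw [ht, Option.card_filter_bind_eq_some]
  · rw [← prod_const]
    refine prod_congr rfl fun i hi => ?_
    rw [not_not.mp (mem_filter.mp hi).2, Option.card_filter_bind_eq_none_s9, PT.zcard]
end

section
/- Let a ∈ PT_n, let ρ_a be the partition of N induced by a (two points lie in one block iff a takes the same value on them, with Z(a) a separate block), let z_a = |Z(a)|, and let m be the smallest cardinality of a block of ρ_a contained in dom(a). Suppose m > z_a + 1. Then the number of equivalence classes of ∼_a of cardinality m·(z_a + 1)^(n−1) equals n·α_m, where α_m is the number of points t ∈ ran(a) whose full preimage a⁻¹(t) has exactly m elements. -/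
/-! The `∼_a`-class of `x` is the fiber of `x ↦ x·a` over `y = x·a`. Its size is the product over
`i ∈ N` of the number of `w ∈ N ∪ {undefined}` with `w·a = y i`, which is `z_a + 1` when `y i` is
undefined and `|a⁻¹(y i)| ≥ m > z_a + 1` otherwise. So the product is `m·(z_a + 1)^(n-1)` exactly
when `y` is defined at a single point `i`, with a value `t` such that `|a⁻¹(t)| = m`, and there are
`n·α_m` such maps `y`. -/

open Finset

theorem Fintype.card_filter_comp_eq_s10 {ι α β : Type*} [Fintype ι] [DecidableEq ι] [Fintype α]
    [DecidableEq β] (f : α → β) (y : ι → β) :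
    (univ.filter fun x : ι → α => f ∘ x = y).card = ∏ i, (univ.filter fun w => f w = y i).card := by
  rw [← Fintype.card_piFinset]
  congr 1
  ext x
  simp [Fintype.mem_piFinset, funext_iff]

section OptionBind

variable {α β : Type*} [Fintype α] (a : α → Option β)

theorem card_filter_bind_eq_none :
    (univ.filter fun w : Option α => w.bind a = none).card =
      (univ.filter fun i => a i = none).card + 1 := by
  rw [card_filter, card_filter, Fintype.sum_option]
  simp [add_comm]

theorem card_filter_bind_eq_some [DecidableEq β] (t : β) :
    (univ.filter fun w : Option α => w.bind a = some t).card =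
      (univ.filter fun i => a i = some t).card := by
  rw [card_filter, card_filter, Fintype.sum_option]
  simp

end OptionBind

section ProdFactorization

variable {ι : Type*} [Fintype ι] [DecidableEq ι]

theorem Fintype.prod_update_const {M : Type*} [CommMonoid M] (b m : M) (i : ι) :
    ∏ j, Function.update (fun _ => b) i m j = m * b ^ (Fintype.card ι - 1) := by
  rw [prod_update_of_mem (mem_univ i), prod_const, card_sdiff_of_subset (by simp), card_singleton,
    card_univ]

theorem Nat.prod_eq_mul_pow_card_sub_one_iff {f : ι → ℕ} {b m : ℕ} (hb : 0 < b) (hbm : b < m)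
    (hf : ∀ i, f i = b ∨ m ≤ f i) :
    ∏ i, f i = m * b ^ (Fintype.card ι - 1) ↔ ∃ i, f i = m ∧ ∀ j ≠ i, f j = b := by
  constructor
  · intro h
    obtain ⟨i, hi⟩ : ∃ i, f i ≠ b := by
      by_contra! hall
      rw [prod_congr rfl fun i _ => hall i, prod_const, Finset.card_univ] at h
      rcases Nat.eq_zero_or_eq_succ_pred (Fintype.card ι) with h0 | hsucc
      · simp [h0] at h
        omega
      · rw [hsucc, pow_succ', Nat.succ_sub_one] at h
        exact hbm.ne (Nat.eq_of_mul_eq_mul_right (pow_pos hb _) h)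
    have hle : ∀ j, Function.update (fun _ => b) i m j ≤ f j := by
      intro j
      rcases eq_or_ne j i with rfl | hj
      · simpa using (hf j).resolve_left hi
      · simp only [Function.update_of_ne hj]
        rcases hf j with h | h <;> omega
    have hpos : ∀ j, 0 < Function.update (fun _ => b) i m j := by
      intro j
      rw [Function.update_apply]
      split_ifs <;> omega
    have heq : f = Function.update (fun _ => b) i m := by
      by_contra hne
      obtain ⟨j, hj⟩ := Function.ne_iff.mp hne
      have hlt := prod_lt_prod (s := univ) (fun j _ => hpos j) (fun j _ => hle j)
        ⟨j, mem_univ j, lt_of_le_of_ne (hle j) (Ne.symm hj)⟩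
      rw [Fintype.prod_update_const, h] at hlt
      exact hlt.false
    exact ⟨i, by simp [heq], fun j hj => by simp [heq, hj]⟩
  · rintro ⟨i, hi, hj⟩
    rw [← Fintype.prod_update_const b m i]
    congr 1
    ext j
    rcases eq_or_ne j i with rfl | hji
    · simp [hi]
    · simp [hj j hji, hji]

end ProdFactorization

namespace PT

variable {n : ℕ}

def single (i t : Fin n) : PT n := Function.update PT.zero i (some t)

theorem single_injective : Function.Injective fun p : Fin n × Fin n => single p.1 p.2 := by
  rintro ⟨i, t⟩ ⟨j, s⟩ h
  have hi := congrFun h i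
  rcases eq_or_ne i j with rfl | hij
  · simpa [single] using hi
  · simp [single, Function.update_of_ne hij, PT.zero] at hi

variable (a : PT n)

theorem card_fiber_comp (y : PT n) :
    (univ.filter fun x : PT n => PT.comp x a = y).card =
      ∏ i, (univ.filter fun w : Option (Fin n) => w.bind a = y i).card :=
  Fintype.card_filter_comp_eq_s10 (fun w : Option (Fin n) => w.bind a) y

theorem card_fiber_single {m : ℕ} {t : Fin n}
    (ht : (univ.filter fun j : Fin n => a j = some t).card = m) (i : Fin n) :
    (univ.filter fun x : PT n => PT.comp x a = single i t).card =
      m * (PT.zcard a + 1) ^ (n - 1) := by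
  have h := Fintype.prod_update_const (PT.zcard a + 1) m i
  rw [Fintype.card_fin] at h
  rw [card_fiber_comp, ← h]
  congr 1
  ext j
  rcases eq_or_ne j i with rfl | hji
  · simp [single, card_filter_bind_eq_some, ht]
  · simp only [single, Function.update_of_ne hji, PT.zero]
    exact card_filter_bind_eq_none a

theorem card_fiber_comp_eq_iff {m : ℕ}
    (hm_le : ∀ t : Fin n, (∃ i, a i = some t) →
      m ≤ (univ.filter fun j : Fin n => a j = some t).card)
    (hgt : PT.zcard a + 1 < m) (x : PT n) :
    (univ.filter fun x' : PT n => PT.comp x' a = PT.comp x a).card =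
        m * (PT.zcard a + 1) ^ (n - 1) ↔
      ∃ i t, (univ.filter fun j : Fin n => a j = some t).card = m ∧ PT.comp x a = single i t := by
  refine ⟨fun h => ?_, fun ⟨i, t, ht, hx⟩ => hx ▸ card_fiber_single a ht i⟩
  set y := PT.comp x a
  set c := fun v : Option (Fin n) => (univ.filter fun w : Option (Fin n) => w.bind a = v).card
  have hnone : c none = PT.zcard a + 1 := card_filter_bind_eq_none a
  have hsome (t : Fin n) : c (some t) = (univ.filter fun j : Fin n => a j = some t).card :=
    card_filter_bind_eq_some a t
  have hrange {i t : Fin n} (hyi : y i = some t) : m ≤ c (some t) := by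
    obtain ⟨j, -, hj⟩ := Option.bind_eq_some_iff.1 hyi
    rw [hsome]
    exact hm_le t ⟨j, hj⟩
  have hf (i : Fin n) : c (y i) = PT.zcard a + 1 ∨ m ≤ c (y i) := by
    cases hyi : y i with
    | none => exact .inl hnone
    | some t => exact .inr (hrange hyi)
  rw [card_fiber_comp] at h
  obtain ⟨i, hi, hj⟩ := (Nat.prod_eq_mul_pow_card_sub_one_iff (Nat.succ_pos _) hgt hf).1
    (by rwa [Fintype.card_fin])
  obtain ⟨t, ht⟩ : ∃ t, y i = some t := by
    refine Option.ne_none_iff_exists'.1 fun hyi => ?_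
    rw [hyi, hnone] at hi
    omega
  refine ⟨i, t, by rwa [ht, hsome] at hi, funext fun j => ?_⟩
  rcases eq_or_ne j i with rfl | hji
  · simp [single, ht]
  · rw [single, Function.update_of_ne hji]
    cases hyj : y j with
    | none => rfl
    | some s =>
      have hb := hj j hji
      rw [hyj] at hb
      have := hrange hyj
      omega

end PT

theorem card_classes_of_card_eq_of_gt_general {n : ℕ} (a : PT n) (m : ℕ)
    (hm_le : ∀ t : Fin n, (∃ i, a i = some t) →
      m ≤ (Finset.univ.filter fun j : Fin n => a j = some t).card)
    (hgt : PT.zcard a + 1 < m) :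
    ((Finset.univ.image fun x : PT n => PT.comp x a).filter fun y : PT n =>
        (Finset.univ.filter fun x : PT n => PT.comp x a = y).card =
          m * (PT.zcard a + 1) ^ (n - 1)).card =
      n * PT.typeCount a m := by
  set T := univ.filter fun t : Fin n => (univ.filter fun j : Fin n => a j = some t).card = m
  have hclasses : ((univ.image fun x : PT n => PT.comp x a).filter fun y : PT n =>
      (univ.filter fun x : PT n => PT.comp x a = y).card = m * (PT.zcard a + 1) ^ (n - 1)) =
        (univ ×ˢ T).image fun p => PT.single p.1 p.2 := by
    ext y
    simp only [mem_filter, mem_image, mem_univ, true_and, mem_product, Prod.exists, T]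
    constructor
    · rintro ⟨⟨x, rfl⟩, hx⟩
      obtain ⟨i, t, ht, hxa⟩ := (PT.card_fiber_comp_eq_iff a hm_le hgt x).1 hx
      exact ⟨i, t, ht, hxa.symm⟩
    · rintro ⟨i, t, ht, rfl⟩
      have hcard := PT.card_fiber_single a ht i
      obtain ⟨x, hx⟩ : (univ.filter fun x : PT n => PT.comp x a = PT.single i t).Nonempty := by
        rw [← card_pos, hcard]
        exact Nat.mul_pos (by omega) (pow_pos (Nat.succ_pos _) _)
      exact ⟨⟨x, (mem_filter.1 hx).2⟩, hcard⟩
  rw [hclasses, card_image_of_injective _ PT.single_injective, card_product, card_univ,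
    Fintype.card_fin]
  rfl

/-- If `m`, the smallest cardinality of a block of `ρ_a` contained in `dom a`, satisfies
`m > z_a + 1`, then the number of `∼_a`-classes of cardinality `m·(z_a + 1)^(n-1)`
equals `n·α_m`. Equivalence classes are identified with the fibers of `x ↦ x·a`. -/
theorem card_classes_of_card_eq_of_gt {n : ℕ} (a : PT n) (m : ℕ)
    (hm_le : ∀ t : Fin n, (∃ i, a i = some t) →
      m ≤ (Finset.univ.filter fun j : Fin n => a j = some t).card)
    (hm_ex : ∃ t : Fin n, (∃ i, a i = some t) ∧
      (Finset.univ.filter fun j : Fin n => a j = some t).card = m)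
    (hgt : PT.zcard a + 1 < m) :
    ((Finset.univ.image fun x : PT n => PT.comp x a).filter fun y : PT n =>
        (Finset.univ.filter fun x : PT n => PT.comp x a = y).card =
          m * (PT.zcard a + 1) ^ (n - 1)).card =
      n * PT.typeCount a m :=
  card_classes_of_card_eq_of_gt_general a m hm_le hgt
end

section
/- Let a, b ∈ PT_n have the same type, i.e. for every k ∈ {1,...,n} the number of points of N whose full a-preimage has exactly k elements equals the number of points whose full b-preimage has exactly k elements. Then the semigroups (PT_n, *_a) and (PT_n, *_b) are isomorphic. -/
open Finset

lemma exists_perm_of_card_fiber_eq {α β : Type*} [Fintype α] [DecidableEq β] (f g : α → β)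
    (h : ∀ c, #{i | f i = c} = #{i | g i = c}) :
    ∃ p : Equiv.Perm α, ∀ i, g (p i) = f i := by
  have e : ∀ c, { i // f i = c } ≃ { i // g i = c } := fun c =>
    Fintype.equivOfCardEq (by simpa only [Fintype.card_subtype] using h c)
  exact ⟨Equiv.ofFiberEquiv e, Equiv.ofFiberEquiv_map e⟩

namespace PT

variable {n : ℕ}

def fiberCard (a : PT n) (t : Fin n) : ℕ := #{i | a i = some t}

lemma typeCount_eq_card_fiberCard (a : PT n) (k : ℕ) :
    typeCount a k = #{t | fiberCard a t = k} := rfl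

lemma fiberCard_le (a : PT n) (t : Fin n) : fiberCard a t ≤ n :=
  (card_filter_le _ _).trans_eq (card_fin n)

lemma sum_typeCount (a : PT n) : ∑ k ∈ range (n + 1), typeCount a k = n := by
  have := card_eq_sum_card_fiberwise (s := univ) (t := range (n + 1))
    fun t _ => mem_range_succ_iff.mpr (fiberCard_le a t)
  simpa [typeCount_eq_card_fiberCard] using this.symm

lemma zcard_add_sum_fiberCard (a : PT n) : zcard a + ∑ t, fiberCard a t = n := by
  have := card_eq_sum_card_fiberwise (f := a) (s := univ) (t := univ) fun i _ => mem_univ _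
  simpa [Fintype.sum_option, zcard, fiberCard] using this.symm

/-- `α₀` is determined by the other `αₖ`, since `α₀ + ⋯ + αₙ = n`. -/
lemma typeCount_eq_of_forall_pos {a b : PT n}
    (h : ∀ k : ℕ, 1 ≤ k → typeCount a k = typeCount b k) (k : ℕ) :
    typeCount a k = typeCount b k := by
  rcases Nat.eq_zero_or_pos k with rfl | hk
  · have ha := sum_typeCount a
    have hb := sum_typeCount b
    rw [sum_range_succ'] at ha hb
    have : ∑ k ∈ range n, typeCount a (k + 1) = ∑ k ∈ range n, typeCount b (k + 1) :=
      sum_congr rfl fun k _ => h (k + 1) k.succ_pos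
    omega
  · exact h k hk

lemma comp_ofPerm (x : PT n) (σ : Equiv.Perm (Fin n)) :
    comp x (ofPerm σ) = fun i => (x i).map σ :=
  funext fun i => by simp only [comp, ofPerm]; cases x i <;> rfl

lemma ofPerm_comp (σ : Equiv.Perm (Fin n)) (x : PT n) :
    comp (ofPerm σ) x = fun i => x (σ i) :=
  rfl

lemma fiberCard_comp_ofPerm (b : PT n) (σ : Equiv.Perm (Fin n)) (t : Fin n) :
    fiberCard (comp b (ofPerm σ)) t = fiberCard b (σ.symm t) := by
  simp only [fiberCard, comp_ofPerm, Option.map_eq_some_iff, ← σ.eq_symm_apply, exists_eq_right]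

lemma zcard_comp_ofPerm (b : PT n) (σ : Equiv.Perm (Fin n)) :
    zcard (comp b (ofPerm σ)) = zcard b := by
  simp only [zcard, comp_ofPerm, Option.map_eq_none_iff]

lemma exists_perm_eq_comp_of_typeCount_eq {a b : PT n}
    (h : ∀ k, typeCount a k = typeCount b k) :
    ∃ σ τ : Equiv.Perm (Fin n), a = comp (comp (ofPerm τ) b) (ofPerm σ) := by
  obtain ⟨p, hp⟩ := exists_perm_of_card_fiber_eq (fiberCard a) (fiberCard b) h
  have hz : zcard a = zcard b := by
    have hsum : ∑ t, fiberCard b t = ∑ t, fiberCard a t := by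
      rw [← Equiv.sum_comp p]
      exact Fintype.sum_congr _ _ hp
    have := zcard_add_sum_fiberCard a
    have := zcard_add_sum_fiberCard b
    omega
  set b' := comp b (ofPerm p.symm)
  have hfiber : ∀ c, #{i | a i = c} = #{i | b' i = c} := by
    rintro (_ | t)
    · exact hz.trans (zcard_comp_ofPerm b p.symm).symm
    · rw [← fiberCard, ← fiberCard, ← hp, fiberCard_comp_ofPerm, Equiv.symm_symm]
  obtain ⟨q, hq⟩ := exists_perm_of_card_fiber_eq a b' hfiber
  exact ⟨p.symm, q, funext fun i => (hq i).symm⟩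

lemma comp_assoc (x y z : PT n) : comp (comp x y) z = comp x (comp y z) :=
  funext fun i => Option.bind_assoc (x i) y z

def permConj (σ τ : Equiv.Perm (Fin n)) : PT n ≃ PT n where
  toFun x := comp (comp (ofPerm σ) x) (ofPerm τ)
  invFun x := comp (comp (ofPerm σ.symm) x) (ofPerm τ.symm)
  left_inv x := by simp [comp_ofPerm, ofPerm_comp, Option.map_map]
  right_inv x := by simp [comp_ofPerm, ofPerm_comp, Option.map_map]

lemma permConj_dmul {a b : PT n} {σ τ : Equiv.Perm (Fin n)}
    (hab : a = comp (comp (ofPerm τ) b) (ofPerm σ)) (x y : PT n) :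
    permConj σ τ (dmul a x y) = dmul b (permConj σ τ x) (permConj σ τ y) := by
  subst hab
  simp only [permConj, dmul, Equiv.coe_fn_mk, comp_assoc]

end PT

/-- If `a` and `b` have the same type then `(PT n, *_a)` and `(PT n, *_b)` are isomorphic. -/
theorem iso_of_same_type {n : ℕ} (a b : PT n)
    (h : ∀ k : ℕ, 1 ≤ k → PT.typeCount a k = PT.typeCount b k) :
    ∃ e : PT n ≃ PT n, ∀ x y : PT n, e (PT.dmul a x y) = PT.dmul b (e x) (e y) := by
  obtain ⟨σ, τ, hab⟩ := PT.exists_perm_eq_comp_of_typeCount_eq (PT.typeCount_eq_of_forall_pos h)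
  exact ⟨PT.permConj σ τ, PT.permConj_dmul hab⟩
end

section
/- The semigroups (PT_n, *_a) and (PT_n, *_b) are isomorphic if and only if the partial transformations a and b have the same type. -/
/-! An isomorphism from `(PT n, *_a)` to `(PT n, *_b)` preserves, for every `x`, the size of the
image of `y ↦ x *_a y` and the number of `x'` with `x' *_a · = x *_a ·`. As `x *_a y = (x a) y`,
these are `(n + 1) ^ rank (x a)` and the number of `x'` with `x' a = x a`, a product over the
points of `x a` of preimage sizes under `a` (an undefined point counts `z_a + 1`). Rank zero
recovers `z_a`. A rank-one map with value `t` on a nonempty set `J` has weight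
`|a⁻¹ t| ^ |J| * (z_a + 1) ^ (n - |J|)`, so counting rank-one maps by weight gives a linear system
in the `α_k`; the weight `max (K ^ n) (K (z_a + 1) ^ (n - 1))` is reached by `k = K` but by no
`k < K`, so the system is triangular and determines the `α_k`. Conversely, equal types give
permutations with `b = π a σ`, and then `x ↦ σ⁻¹ x π⁻¹` is an isomorphism. -/

open Finset

theorem exists_equiv_comp_eq_of_card_fiber_eq {α β γ : Type*} [Fintype α] [Fintype β]
    [DecidableEq γ] {f : α → γ} {g : β → γ} (h : ∀ c, #{x | f x = c} = #{y | g y = c}) :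
    ∃ σ : α ≃ β, ∀ x, g (σ x) = f x :=
  ⟨Equiv.ofFiberEquiv fun c => Fintype.equivOfCardEq (by simpa [Fintype.card_subtype] using h c),
    Equiv.ofFiberEquiv_map _⟩

theorem card_fiber_eq_of_card_fiber_ne {α γ : Type*} [Fintype α] [DecidableEq γ] {f g : α → γ}
    {c₀ : γ} (h : ∀ c ≠ c₀, #{x | f x = c} = #{x | g x = c}) :
    #{x | f x = c₀} = #{x | g x = c₀} := by
  let T := (univ.image f ∪ univ.image g).erase c₀
  have hrest : ∀ φ : α → γ, (∀ x, φ x ∈ univ.image f ∪ univ.image g) →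
      #{x | φ x ≠ c₀} = ∑ c ∈ T, #{x | φ x = c} := fun φ hφ => by
    rw [card_eq_sum_card_fiberwise (f := φ) (t := T) fun x hx =>
      mem_erase.mpr ⟨(mem_filter.mp hx).2, hφ x⟩]
    refine sum_congr rfl fun c hc => ?_
    rw [filter_filter]
    exact congrArg card (filter_congr fun x _ =>
      ⟨And.right, fun hx => ⟨hx ▸ (mem_erase.mp hc).1, hx⟩⟩)
  have hne : #{x | f x ≠ c₀} = #{x | g x ≠ c₀} := by
    rw [hrest f (by simp), hrest g (by simp)]
    exact sum_congr rfl fun c hc => h c (mem_erase.mp hc).1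
  have hf := card_filter_add_card_filter_not (s := univ) (fun x => f x = c₀)
  have hg := card_filter_add_card_filter_not (s := univ) (fun x => g x = c₀)
  simp only [ne_eq] at hne
  omega

theorem eq_of_triangular_sum_eq {s : Finset ℕ} {N : ℕ → ℕ → ℕ} {w f g : ℕ → ℕ}
    (hdiag : ∀ K ∈ s, N K (w K) ≠ 0) (hlow : ∀ K ∈ s, ∀ k ∈ s, k < K → N k (w K) = 0)
    (hsum : ∀ K ∈ s, ∑ k ∈ s, f k * N k (w K) = ∑ k ∈ s, g k * N k (w K)) :
    ∀ K ∈ s, f K = g K := by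
  by_contra! hne
  obtain ⟨K, hK, hKmax⟩ := (s.filter fun k => f k ≠ g k).exists_max_image id
    (by simpa [Finset.Nonempty] using hne)
  rw [mem_filter] at hK
  have hrest : ∑ k ∈ s.erase K, f k * N k (w K) = ∑ k ∈ s.erase K, g k * N k (w K) := by
    refine sum_congr rfl fun k hk => ?_
    obtain ⟨hkK, hks⟩ := mem_erase.mp hk
    rcases hkK.lt_or_gt with hlt | hgt
    · simp [hlow K hK.1 k hks hlt]
    · by_contra hfg
      exact absurd (hKmax k (mem_filter.mpr ⟨hks, fun h => hfg (by rw [h])⟩)) (not_le.mpr hgt)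
  have hsumK := hsum K hK.1
  rw [← add_sum_erase s _ hK.1, ← add_sum_erase s _ hK.1, hrest, add_left_inj] at hsumK
  exact hK.2 (Nat.eq_of_mul_eq_mul_right (Nat.pos_of_ne_zero (hdiag K hK.1)) hsumK)

theorem pow_mul_pow_sub_le_max {K q j n : ℕ} (hj : 1 ≤ j) (hjn : j ≤ n) :
    K ^ j * q ^ (n - j) ≤ max (K ^ n) (K * q ^ (n - 1)) := by
  rcases le_total q K with hqK | hKq
  · calc K ^ j * q ^ (n - j) ≤ K ^ j * K ^ (n - j) :=
          Nat.mul_le_mul_left _ (Nat.pow_le_pow_left hqK _)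
      _ = K ^ n := by rw [← pow_add, Nat.add_sub_cancel' hjn]
      _ ≤ _ := le_max_left _ _
  · calc K ^ j * q ^ (n - j) = K * (K ^ (j - 1) * q ^ (n - j)) := by
          rw [← mul_assoc, ← pow_succ', Nat.sub_add_cancel hj]
      _ ≤ K * (q ^ (j - 1) * q ^ (n - j)) :=
          Nat.mul_le_mul_left _ (Nat.mul_le_mul_right _ (Nat.pow_le_pow_left hKq _))
      _ = K * q ^ (n - 1) := by rw [← pow_add]; congr 2; omega
      _ ≤ _ := le_max_right _ _

def subsetWeightCount (n q k v : ℕ) : ℕ :=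
  #{J : Finset (Fin n) | J.Nonempty ∧ k ^ #J * q ^ (n - #J) = v}

theorem subsetWeightCount_zero_left {n q v : ℕ} (hv : 0 < v) : subsetWeightCount n q 0 v = 0 := by
  refine card_eq_zero.mpr (filter_eq_empty_iff.mpr fun J _ ⟨hJ, hJv⟩ => hv.ne ?_)
  rw [← hJv, zero_pow (card_pos.mpr hJ).ne', zero_mul]

theorem subsetWeightCount_max_pos {n : ℕ} (hn : 0 < n) (q K : ℕ) :
    0 < subsetWeightCount n q K (max (K ^ n) (K * q ^ (n - 1))) := by
  refine card_pos.mpr ?_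
  rcases le_total (K * q ^ (n - 1)) (K ^ n) with h | h
  · refine ⟨univ, mem_filter.mpr ⟨mem_univ _, univ_nonempty_iff.mpr ⟨⟨0, hn⟩⟩, ?_⟩⟩
    simp [max_eq_left h]
  · refine ⟨{⟨0, hn⟩}, mem_filter.mpr ⟨mem_univ _, singleton_nonempty _, ?_⟩⟩
    simp [max_eq_right h]

theorem subsetWeightCount_max_eq_zero {n q k K : ℕ} (hq : 0 < q) (hkK : k < K) :
    subsetWeightCount n q k (max (K ^ n) (K * q ^ (n - 1))) = 0 := by
  refine card_eq_zero.mpr (filter_eq_empty_iff.mpr fun J _ ⟨hJ, hJv⟩ => hJv.not_lt ?_)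
  have hj : 1 ≤ #J := card_pos.mpr hJ
  calc k ^ #J * q ^ (n - #J) < K ^ #J * q ^ (n - #J) :=
        Nat.mul_lt_mul_of_pos_right (Nat.pow_lt_pow_left hkK (by omega)) (pow_pos hq _)
    _ ≤ _ := pow_mul_pow_sub_le_max hj (by simpa using card_le_univ J)

section MagmaIso

variable {α β : Type*} {μ : α → α → α} {ν : β → β → β}

noncomputable def leftStats (μ : α → α → α) (x : α) : ℕ × ℕ :=
  (Nat.card (Set.range (μ x)), Nat.card {x' // μ x' = μ x})

theorem leftStats_apply_of_iso {e : α ≃ β} (he : ∀ x y, e (μ x y) = ν (e x) (e y)) (x : α) :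
    leftStats ν (e x) = leftStats μ x := by
  have hrange : Set.range (ν (e x)) = e '' Set.range (μ x) := by
    rw [← Set.range_comp, ← e.surjective.range_comp]
    simp only [Function.comp_def, he]
  have hleft : ∀ x', ν (e x') = ν (e x) ↔ μ x' = μ x := fun x' => by
    simp only [funext_iff, ← e.forall_congr_right (q := fun y => ν (e x') y = ν (e x) y), ← he,
      e.apply_eq_iff_eq]
  refine Prod.ext ?_ (Nat.card_congr (e.subtypeEquiv fun x' => (hleft x').symm)).symm
  rw [leftStats, hrange, Nat.card_image_of_injective e.injective]; rfl

theorem card_leftStats_eq_of_iso {e : α ≃ β} (he : ∀ x y, e (μ x y) = ν (e x) (e y))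
    (s : ℕ × ℕ) : Nat.card {x // leftStats μ x = s} = Nat.card {y // leftStats ν y = s} :=
  Nat.card_congr (e.subtypeEquiv fun x => by rw [leftStats_apply_of_iso he])

end MagmaIso

namespace PT

variable {n : ℕ}

def one : PT n := fun i => some i

theorem comp_one (c : PT n) : comp c one = c :=
  funext fun i => show (c i).bind some = c i by cases c i <;> rfl

theorem dmul_eq_dmul_iff {a x x' : PT n} : dmul a x' = dmul a x ↔ comp x' a = comp x a := by
  refine ⟨fun h => ?_, fun h => by simp only [funext_iff, dmul, h, implies_true]⟩
  simpa only [dmul, comp_one] using congrFun h one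

theorem card_range_comp (c : PT n) : Nat.card (Set.range (comp c)) = (n + 1) ^ rank c := by
  classical
  let R := {t // ∃ i, c i = some t}
  let F : (R → Option (Fin n)) → PT n := fun u i => (c i).pbind fun t h => u ⟨t, i, h⟩
  have hF : comp c = F ∘ Subtype.restrict _ :=
    funext fun y => funext fun i => (Option.pbind_eq_bind (c i) y).symm
  have hFinj : F.Injective := fun u u' h => funext fun ⟨t, i, hi⟩ => by
    simpa [F, hi] using congrFun h i
  rw [hF, (Subtype.surjective_restrict (β := fun _ => Option (Fin n)) _).range_comp F,
    Nat.card_range_of_injective hFinj, Nat.card_fun, Nat.card_eq_fintype_card (α := R),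
    Fintype.card_subtype, Nat.card_eq_fintype_card, Fintype.card_option, Fintype.card_fin,
    rank]

def preimageCard (a : PT n) (t : Fin n) : ℕ := #{i | a i = some t}

theorem typeCount_def (a : PT n) (k : ℕ) : typeCount a k = #{t | preimageCard a t = k} := rfl

def precompCard (a c : PT n) : ℕ := #{x | comp x a = c}

def optionPreimageCard (a : PT n) (o : Option (Fin n)) : ℕ := #{o' : Option (Fin n) | o'.bind a = o}

theorem optionPreimageCard_some (a : PT n) (t : Fin n) :
    optionPreimageCard a (some t) = preimageCard a t := by
  have : ({o' | o'.bind a = some t} : Finset (Option (Fin n))) = map .some {i | a i = some t} := by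
    ext o; cases o <;> simp
  rw [optionPreimageCard, this, card_map, preimageCard]

theorem optionPreimageCard_none (a : PT n) : optionPreimageCard a none = zcard a + 1 := by
  have : ({o' | o'.bind a = none} : Finset (Option (Fin n))) = insertNone {i | a i = none} := by
    ext o; cases o <;> simp
  rw [optionPreimageCard, this, card_insertNone, zcard]

theorem precompCard_eq_prod (a c : PT n) :
    precompCard a c = ∏ i, optionPreimageCard a (c i) := by
  simp only [precompCard, optionPreimageCard, ← Fintype.card_subtype, funext_iff, comp]
  rw [Fintype.card_congr (Equiv.subtypePiEquivPi (β := fun _ => Option (Fin n))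
    (p := fun i o => o.bind a = c i)), Fintype.card_pi]

theorem precompCard_zero (a : PT n) : precompCard a zero = (zcard a + 1) ^ n := by
  simp [precompCard_eq_prod, zero, optionPreimageCard_none]

theorem rank_eq_zero_iff {c : PT n} : rank c = 0 ↔ c = zero := by
  simp only [rank, card_eq_zero, filter_eq_empty_iff, mem_univ, true_implies, not_exists,
    funext_iff, zero, Option.eq_none_iff_forall_ne_some]
  exact forall_comm

def constOn (J : Finset (Fin n)) (t : Fin n) : PT n := fun i => if i ∈ J then some t else none

theorem precompCard_constOn (a : PT n) (J : Finset (Fin n)) (t : Fin n) :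
    precompCard a (constOn J t) = preimageCard a t ^ #J * (zcard a + 1) ^ (n - #J) := by
  rw [precompCard_eq_prod, ← prod_mul_prod_compl J, show n - #J = #Jᶜ by simp [card_compl],
    ← prod_const, ← prod_const]
  congr 1 <;> refine prod_congr rfl fun i hi => ?_
  · rw [constOn, if_pos hi, optionPreimageCard_some]
  · rw [constOn, if_neg (mem_compl.mp hi), optionPreimageCard_none]

theorem constOn_eq_some_iff {J : Finset (Fin n)} {t s : Fin n} {i : Fin n} :
    constOn J t i = some s ↔ i ∈ J ∧ t = s := by
  simp [constOn]

theorem rank_constOn {J : Finset (Fin n)} (hJ : J.Nonempty) (t : Fin n) :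
    rank (constOn J t) = 1 := by
  rw [rank, card_eq_one]
  refine ⟨t, eq_singleton_iff_unique_mem.mpr ⟨?_, fun s hs => ?_⟩⟩
  · obtain ⟨i, hi⟩ := hJ
    simpa [constOn_eq_some_iff] using ⟨i, hi⟩
  · obtain ⟨i, -, rfl⟩ : ∃ i, i ∈ J ∧ t = s := by simpa [constOn_eq_some_iff] using hs
    rfl

theorem constOn_inj {J J' : Finset (Fin n)} (hJ : J.Nonempty) {t t' : Fin n}
    (h : constOn J t = constOn J' t') : J = J' ∧ t = t' := by
  obtain ⟨i, hi⟩ := hJ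
  have ht : t = t' := (constOn_eq_some_iff.mp (h ▸ constOn_eq_some_iff.mpr ⟨hi, rfl⟩)).2.symm
  subst ht
  refine ⟨ext fun j => ?_, rfl⟩
  simpa [constOn_eq_some_iff] using congrArg (· = some t) (congrFun h j)

theorem exists_constOn_of_rank_eq_one {c : PT n} (hc : rank c = 1) :
    ∃ J t, J.Nonempty ∧ constOn J t = c := by
  obtain ⟨t, ht⟩ := card_eq_one.mp hc
  have hran : ∀ s, (∃ i, c i = some s) ↔ s = t := fun s => by
    simpa [rank] using Finset.ext_iff.mp ht s
  obtain ⟨i₀, hi₀⟩ := (hran t).mpr rfl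
  refine ⟨({i | c i = some t} : Finset (Fin n)), t, ⟨i₀, by simpa using hi₀⟩, funext fun i => ?_⟩
  cases hci : c i with
  | none => simp [constOn, hci]
  | some s => simp [constOn, hci, (hran s).mp ⟨i, hci⟩]

def shapeCount (a : PT n) (r v : ℕ) : ℕ := #{c | rank c = r ∧ precompCard a c = v}

theorem shapeCount_zero (a : PT n) (v : ℕ) :
    shapeCount a 0 v = if (zcard a + 1) ^ n = v then 1 else 0 := by
  simp [shapeCount, rank_eq_zero_iff, card_filter, ite_and, precompCard_zero]

theorem shapeCount_one (a : PT n) (v : ℕ) :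
    shapeCount a 1 v = ∑ t, subsetWeightCount n (zcard a + 1) (preimageCard a t) v := by
  have hbij : #{p : Fin n × Finset (Fin n) | p.2.Nonempty ∧ precompCard a (constOn p.2 p.1) = v}
      = shapeCount a 1 v := by
    refine card_nbij (fun p => constOn p.2 p.1) (fun p hp => ?_) (fun p hp p' hp' h => ?_)
      (fun c hc => ?_)
    · simp only [coe_filter, mem_univ, true_and, Set.mem_ofPred_eq] at hp ⊢
      exact ⟨rank_constOn hp.1 _, hp.2⟩
    · obtain ⟨hJ, ht⟩ := constOn_inj (mem_filter.mp hp).2.1 h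
      exact Prod.ext ht hJ
    · simp only [coe_filter, mem_univ, true_and, Set.mem_ofPred_eq] at hc
      obtain ⟨J, t, hJ, rfl⟩ := exists_constOn_of_rank_eq_one hc.1
      exact ⟨(t, J), by simpa using ⟨hJ, hc.2⟩, rfl⟩
  rw [← hbij, card_filter, Fintype.sum_prod_type]
  simp only [precompCard_constOn, subsetWeightCount, card_filter]

theorem leftStats_dmul (a x : PT n) :
    leftStats (dmul a) x = ((n + 1) ^ rank (comp x a), precompCard a (comp x a)) := by
  refine Prod.ext (card_range_comp (comp x a)) ?_
  simp only [leftStats, dmul_eq_dmul_iff, Nat.card_eq_fintype_card, Fintype.card_subtype,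
    precompCard]

theorem card_leftStats_dmul (hn : 0 < n) (a : PT n) (r v : ℕ) :
    Nat.card {x // leftStats (dmul a) x = ((n + 1) ^ r, v)} = v * shapeCount a r v := by
  simp only [Nat.card_eq_fintype_card, Fintype.card_subtype, leftStats_dmul, Prod.mk.injEq,
    (Nat.pow_right_injective (by omega : 2 ≤ n + 1)).eq_iff]
  rw [card_eq_sum_card_fiberwise (f := (comp · a)) (t := {c | rank c = r ∧ precompCard a c = v})
    (fun x hx => by simpa using hx), sum_const_nat (m := v), shapeCount, mul_comm]
  intro c hc
  rw [mem_filter] at hc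
  rw [filter_filter]
  refine (congrArg card (filter_congr fun x _ => ?_)).trans hc.2.2
  exact ⟨And.right, fun h => ⟨h ▸ hc.2, h⟩⟩

section Iso

variable {a b : PT n} {e : PT n ≃ PT n} (he : ∀ x y, e (dmul a x y) = dmul b (e x) (e y))
include he

theorem shapeCount_eq_of_iso (hn : 0 < n) {v : ℕ} (hv : 0 < v) (r : ℕ) :
    shapeCount a r v = shapeCount b r v :=
  Nat.eq_of_mul_eq_mul_left hv <| by
    rw [← card_leftStats_dmul hn, ← card_leftStats_dmul hn, card_leftStats_eq_of_iso he]

theorem zcard_eq_of_iso (hn : 0 < n) : zcard a = zcard b := by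
  have h := shapeCount_eq_of_iso he hn (pow_pos (Nat.succ_pos (zcard a)) n) 0
  rw [shapeCount_zero, shapeCount_zero, if_pos rfl] at h
  have hpow : (zcard b + 1) ^ n = (zcard a + 1) ^ n := by
    by_contra hne
    simp [hne] at h
  exact (Nat.succ_injective (Nat.pow_left_injective hn.ne' hpow)).symm

end Iso

theorem preimageCard_le (a : PT n) (t : Fin n) : preimageCard a t ≤ n :=
  (card_filter_le _ _).trans (card_fin n).le

theorem sum_subsetWeightCount_preimageCard (a : PT n) (q : ℕ) {m v : ℕ} (hm : n ≤ m)
    (hv : 0 < v) :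
    ∑ t, subsetWeightCount n q (preimageCard a t) v
      = ∑ k ∈ Icc 1 m, typeCount a k * subsetWeightCount n q k v := by
  rw [← sum_fiberwise_of_maps_to (g := preimageCard a) (t := range (m + 1))
    fun t _ => mem_range.mpr (Nat.lt_succ_of_le ((preimageCard_le a t).trans hm))]
  rw [sum_congr rfl fun k _ => sum_congr rfl fun t ht => by rw [(mem_filter.mp ht).2]]
  simp only [sum_const, smul_eq_mul, ← typeCount_def]
  refine (sum_subset (fun k hk => mem_range.mpr (by simp at hk; omega)) fun k hk hk' => ?_).symm
  obtain rfl : k = 0 := by simp at hk hk'; omega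
  rw [subsetWeightCount_zero_left hv, mul_zero]

theorem typeCount_eq_of_iso {a b : PT n} {e : PT n ≃ PT n}
    (he : ∀ x y, e (dmul a x y) = dmul b (e x) (e y)) {k : ℕ} (hk : 1 ≤ k) :
    typeCount a k = typeCount b k := by
  rcases n.eq_zero_or_pos with rfl | hn
  · simp [typeCount]
  have hz := zcard_eq_of_iso he hn
  refine eq_of_triangular_sum_eq (s := Icc 1 (max n k)) (N := subsetWeightCount n (zcard a + 1))
    (w := fun K => max (K ^ n) (K * (zcard a + 1) ^ (n - 1)))
    (fun K _ => (subsetWeightCount_max_pos hn _ _).ne')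
    (fun K _ k _ hkK => subsetWeightCount_max_eq_zero (Nat.succ_pos _) hkK) (fun K hK => ?_) k
    (mem_Icc.mpr ⟨hk, le_max_right n k⟩)
  have hv : 0 < max (K ^ n) (K * (zcard a + 1) ^ (n - 1)) :=
    lt_max_of_lt_left (pow_pos (mem_Icc.mp hK).1 n)
  have hb := shapeCount_one b (max (K ^ n) (K * (zcard a + 1) ^ (n - 1)))
  rw [← hz] at hb
  rw [← sum_subsetWeightCount_preimageCard a _ (le_max_left n k) hv,
    ← sum_subsetWeightCount_preimageCard b _ (le_max_left n k) hv, ← shapeCount_one, ← hb]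
  exact shapeCount_eq_of_iso he hn hv 1

def relabel (π σ : Equiv.Perm (Fin n)) : PT n ≃ PT n := π.symm.arrowCongr σ.optionCongr

theorem relabel_apply (π σ : Equiv.Perm (Fin n)) (x : PT n) (i : Fin n) :
    relabel π σ x i = (x (π i)).map σ := rfl

theorem relabel_dmul (π σ : Equiv.Perm (Fin n)) (a x y : PT n) :
    relabel π σ (dmul a x y) = dmul (relabel σ.symm π.symm a) (relabel π σ x) (relabel π σ y) := by
  funext i
  simp only [relabel_apply, dmul, comp]
  cases x (π i) with
  | none => rfl
  | some j => cases h : a j <;> simp [relabel_apply, h]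

theorem exists_relabel_eq_of_typeCount_eq {a b : PT n}
    (h : ∀ k, 1 ≤ k → typeCount a k = typeCount b k) :
    ∃ π σ : Equiv.Perm (Fin n), relabel π σ a = b := by
  have hcount : ∀ k, #{t | preimageCard a t = k} = #{t | preimageCard b t = k} := fun k => by
    rcases k.eq_zero_or_pos with rfl | hk
    · exact card_fiber_eq_of_card_fiber_ne fun k hk => h k (Nat.one_le_iff_ne_zero.mpr hk)
    · exact h k hk
  obtain ⟨σ, hσ⟩ := exists_equiv_comp_eq_of_card_fiber_eq hcount
  have hsome : ∀ s, #{i | (a i).map σ = some s} = #{i | b i = some s} := fun s => by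
    calc #{i | (a i).map σ = some s} = preimageCard a (σ.symm s) := by
          simp only [preimageCard, Option.map_eq_some_iff, ← Equiv.eq_symm_apply,
            exists_eq_right]
      _ = #{i | b i = some s} := by rw [← hσ, Equiv.apply_symm_apply]; rfl
  obtain ⟨π, hπ⟩ := exists_equiv_comp_eq_of_card_fiber_eq (f := b) (g := fun i => (a i).map σ)
    fun o => by
      cases o with
      | none => exact (card_fiber_eq_of_card_fiber_ne fun o ho => by
          obtain ⟨s, rfl⟩ := Option.ne_none_iff_exists'.mp ho
          exact hsome s).symm
      | some s => exact (hsome s).symm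
  exact ⟨π, σ, funext hπ⟩

end PT

/-- `(PT n, *_a)` and `(PT n, *_b)` are isomorphic iff `a` and `b` have the same type. -/
theorem iso_iff_same_type {n : ℕ} (a b : PT n) :
    (∃ e : PT n ≃ PT n, ∀ x y : PT n, e (PT.dmul a x y) = PT.dmul b (e x) (e y)) ↔
      ∀ k : ℕ, 1 ≤ k → PT.typeCount a k = PT.typeCount b k := by
  constructor
  · rintro ⟨e, he⟩ k hk
    exact PT.typeCount_eq_of_iso he hk
  · intro h
    obtain ⟨π, σ, rfl⟩ := PT.exists_relabel_eq_of_typeCount_eq h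
    exact ⟨PT.relabel σ.symm π.symm, fun x y => by
      simpa only [Equiv.symm_symm] using PT.relabel_dmul σ.symm π.symm a x y⟩
end
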